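/- arXiv:1212.4715 — 5 statements merged into one kernel-verified Lean document; each statement's English description precedes it below -/
import Mathlib

section
/- Let a ∈ ℝ be fixed. Then there exist constants 0 < c ≤ C (depending only on a) such that for every T with 0 < T < 1 the integral J(T) = ∫₀¹ ζ^{-a} exp(−T/ζ) dζ satisfies: if a > 1 then c·T^{1−a} ≤ J(T) ≤ C·T^{1−a}; if a = 1 then c·log(2/T) ≤ J(T) ≤ C·log(2/T); and if a < 1 then c ≤ J(T) ≤ C. -/
/-!
For `ζ ≥ T / 2` the factor `exp (-T / ζ)` lies in `[exp (-2), 1]`, so `J(T)` is squeezed between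
`exp (-2) * ∫_{T/2}^1 ζ^{-a}` and `∫_T^1 ζ^{-a}` plus the contribution of `(0, T)`. On `(0, T)` the
bound `exp (-x) ≤ n! / x ^ n` with `n = ⌈a⌉₊` makes that contribution at most `n! * T^{1-a}`.
The three regimes are then read off from the explicit value of `∫_s^1 ζ^{-a}`.
-/

open Real Set MeasureTheory intervalIntegral
open scoped Nat

noncomputable def kernelIntegral (a T : ℝ) : ℝ :=
  ∫ ζ in Ioo (0:ℝ) 1, ζ ^ (-a) * exp (-T / ζ)

lemma kernelIntegral_eq_intervalIntegral (a T : ℝ) :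
    kernelIntegral a T = ∫ ζ in 0..1, ζ ^ (-a) * exp (-T / ζ) := by
  rw [kernelIntegral, integral_of_le zero_le_one, integral_Ioc_eq_integral_Ioo]

lemma exp_neg_div_le (n : ℕ) {T ζ : ℝ} (hT : 0 < T) (hζ : 0 < ζ) :
    exp (-T / ζ) ≤ n ! / T ^ n * ζ ^ n := by
  have h := pow_div_factorial_le_exp _ (div_pos hT hζ).le n
  rw [neg_div, exp_neg]
  calc (exp (T / ζ))⁻¹ ≤ ((T / ζ) ^ n / n !)⁻¹ := inv_anti₀ (by positivity) h
    _ = n ! / T ^ n * ζ ^ n := by rw [div_pow]; field_simp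

lemma rpow_neg_mul_exp_neg_div_le (n : ℕ) (a : ℝ) {T ζ : ℝ} (hT : 0 < T) (hζ : 0 < ζ) :
    ζ ^ (-a) * exp (-T / ζ) ≤ n ! / T ^ n * ζ ^ ((n : ℝ) - a) := by
  calc ζ ^ (-a) * exp (-T / ζ) ≤ ζ ^ (-a) * (n ! / T ^ n * ζ ^ n) := by
        gcongr; exact exp_neg_div_le n hT hζ
    _ = n ! / T ^ n * ζ ^ ((n : ℝ) - a) := by
        rw [sub_eq_neg_add, rpow_add hζ, rpow_natCast]; ring

lemma intervalIntegrable_kernel (a : ℝ) {T b : ℝ} (hT : 0 < T) (hb : 0 ≤ b) :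
    IntervalIntegrable (fun ζ => ζ ^ (-a) * exp (-T / ζ)) volume 0 b := by
  have hn : (-1 : ℝ) < ⌈a⌉₊ - a := by linarith [Nat.le_ceil a]
  refine ((intervalIntegrable_rpow' hn).const_mul (⌈a⌉₊ ! / T ^ ⌈a⌉₊)).mono_fun'
    (by fun_prop) ?_
  rw [uIoc_of_le hb, Filter.EventuallyLE, ae_restrict_iff' measurableSet_Ioc]
  filter_upwards with ζ hζ
  rw [norm_of_nonneg (by have := hζ.1; positivity)]
  exact rpow_neg_mul_exp_neg_div_le _ a hT hζ.1

lemma integral_zero_kernel_le (a : ℝ) {T : ℝ} (hT : 0 < T) :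
    ∫ ζ in 0..T, ζ ^ (-a) * exp (-T / ζ) ≤ ⌈a⌉₊ ! * T ^ (1 - a) := by
  have hna := Nat.le_ceil a
  set n := ⌈a⌉₊
  have hn : (-1 : ℝ) < n - a := by linarith
  calc ∫ ζ in 0..T, ζ ^ (-a) * exp (-T / ζ)
      ≤ ∫ ζ in 0..T, n ! / T ^ n * ζ ^ ((n : ℝ) - a) :=
        integral_mono_on_of_le_Ioo hT.le (intervalIntegrable_kernel a hT hT.le)
          ((intervalIntegrable_rpow' hn).const_mul _)
          fun ζ hζ => rpow_neg_mul_exp_neg_div_le n a hT hζ.1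
    _ = n ! * T ^ (1 - a) / (n - a + 1) := by
        rw [intervalIntegral.integral_const_mul, integral_rpow (Or.inl hn), zero_rpow (by linarith),
          sub_zero, show (n : ℝ) - a + 1 = n + (1 - a) by ring, rpow_add hT, rpow_natCast]
        field_simp
    _ ≤ n ! * T ^ (1 - a) := div_le_self (by positivity) (by linarith)

lemma integral_kernel_le_integral_rpow (a : ℝ) {T s : ℝ} (hT : 0 < T) (hs : 0 < s)
    (hs1 : s ≤ 1) :
    ∫ ζ in s..1, ζ ^ (-a) * exp (-T / ζ) ≤ ∫ ζ in s..1, ζ ^ (-a) := by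
  refine integral_mono_on hs1
    ((intervalIntegrable_kernel a hT zero_le_one).mono_set ?_)
    (intervalIntegrable_rpow (Or.inr (notMem_uIcc_of_lt hs one_pos))) fun ζ hζ => ?_
  · rw [uIcc_of_le hs1, uIcc_of_le zero_le_one]; exact Icc_subset_Icc_left hs.le
  · have hζ0 : 0 < ζ := hs.trans_le hζ.1
    have : exp (-T / ζ) ≤ 1 := exp_le_one_iff.2 (div_nonpos_of_nonpos_of_nonneg (by linarith) hζ0.le)
    calc ζ ^ (-a) * exp (-T / ζ) ≤ ζ ^ (-a) * 1 := by gcongr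
      _ = ζ ^ (-a) := mul_one _

lemma kernelIntegral_le (a : ℝ) {T : ℝ} (hT : 0 < T) (hT1 : T ≤ 1) :
    kernelIntegral a T ≤ ⌈a⌉₊ ! * T ^ (1 - a) + ∫ ζ in T..1, ζ ^ (-a) := by
  rw [kernelIntegral_eq_intervalIntegral, ← integral_add_adjacent_intervals
    (intervalIntegrable_kernel a hT hT.le) ((intervalIntegrable_kernel a hT zero_le_one).mono_set
      (by rw [uIcc_of_le hT1, uIcc_of_le zero_le_one]; exact Icc_subset_Icc_left hT.le))]
  exact add_le_add (integral_zero_kernel_le a hT) (integral_kernel_le_integral_rpow a hT hT hT1)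

lemma exp_neg_two_mul_integral_rpow_le (a : ℝ) {T : ℝ} (hT : 0 < T) (hT2 : T ≤ 2) :
    exp (-2) * ∫ ζ in T / 2..1, ζ ^ (-a) ≤ kernelIntegral a T := by
  have hT2' : T / 2 ≤ 1 := by linarith
  have hint := intervalIntegrable_kernel a hT zero_le_one
  rw [kernelIntegral_eq_intervalIntegral, ← intervalIntegral.integral_const_mul]
  calc ∫ ζ in T / 2..1, exp (-2) * ζ ^ (-a)
      ≤ ∫ ζ in T / 2..1, ζ ^ (-a) * exp (-T / ζ) := by
        refine integral_mono_on hT2'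
          ((intervalIntegrable_rpow (Or.inr (notMem_uIcc_of_lt (by positivity) one_pos))).const_mul _)
          (hint.mono_set ?_) fun ζ hζ => ?_
        · rw [uIcc_of_le hT2', uIcc_of_le zero_le_one]; exact Icc_subset_Icc_left (by positivity)
        · have hζ0 : 0 < ζ := (by positivity : 0 < T / 2).trans_le hζ.1
          have : -2 ≤ -T / ζ := by
            rw [le_div_iff₀ hζ0]; linarith [hζ.1]
          rw [mul_comm]; gcongr
    _ ≤ ∫ ζ in 0..1, ζ ^ (-a) * exp (-T / ζ) := by
        refine integral_mono_interval (by positivity) hT2' le_rfl ?_ hint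
        rw [Filter.EventuallyLE, ae_restrict_iff' measurableSet_Ioc]
        filter_upwards with ζ hζ
        have := hζ.1
        positivity

lemma integral_rpow_neg_of_ne_one {a s : ℝ} (ha : a ≠ 1) (hs : 0 < s) :
    ∫ ζ in s..1, ζ ^ (-a) = (1 - s ^ (1 - a)) / (1 - a) := by
  rw [integral_rpow (Or.inr ⟨by contrapose! ha; linarith, notMem_uIcc_of_lt hs one_pos⟩),
    one_rpow, neg_add_eq_sub]

lemma integral_rpow_neg_one {s : ℝ} (hs : 0 < s) :
    ∫ ζ in s..1, ζ ^ (-1 : ℝ) = log (1 / s) := by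
  simp only [rpow_neg_one]
  exact integral_inv_of_pos hs one_pos

def ComparableOnUnitInterval (f w : ℝ → ℝ) : Prop :=
  ∃ c C : ℝ, 0 < c ∧ c ≤ C ∧ ∀ T, 0 < T → T < 1 → c * w T ≤ f T ∧ f T ≤ C * w T

lemma ComparableOnUnitInterval.of_bounds {f w : ℝ → ℝ} {c C : ℝ} (hc : 0 < c) (hw : 0 < w (1 / 2))
    (h : ∀ T, 0 < T → T < 1 → c * w T ≤ f T ∧ f T ≤ C * w T) : ComparableOnUnitInterval f w :=
  have h_half := h (1 / 2) (by norm_num) (by norm_num)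
  ⟨c, C, hc, le_of_mul_le_mul_right (h_half.1.trans h_half.2) hw, h⟩

lemma comparableOnUnitInterval_kernelIntegral_of_one_lt {a : ℝ} (ha : 1 < a) :
    ComparableOnUnitInterval (kernelIntegral a) fun T => T ^ (1 - a) := by
  have ha' : 0 < a - 1 := by linarith
  have hK : 1 < (2 : ℝ) ^ (a - 1) := one_lt_rpow one_lt_two ha'
  have hflip (x : ℝ) : (1 - x) / (1 - a) = (x - 1) / (a - 1) := by
    rw [← neg_div_neg_eq, neg_sub, neg_sub]
  refine .of_bounds (c := exp (-2) * ((2 ^ (a - 1) - 1) / (a - 1)))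
    (C := ⌈a⌉₊ ! + 1 / (a - 1)) (mul_pos (exp_pos _) (div_pos (by linarith) ha'))
    (by positivity) fun T hT0 hT1 => ⟨?_, ?_⟩
  · have hX : 1 ≤ T ^ (1 - a) := one_le_rpow_of_pos_of_le_one_of_nonpos hT0 hT1.le (by linarith)
    have hsplit : (T / 2) ^ (1 - a) = T ^ (1 - a) * 2 ^ (a - 1) := by
      rw [div_eq_mul_inv, mul_rpow hT0.le (by norm_num), inv_rpow (by norm_num),
        ← rpow_neg (by norm_num), neg_sub]
    refine le_trans ?_ (exp_neg_two_mul_integral_rpow_le a hT0 (by linarith))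
    rw [integral_rpow_neg_of_ne_one ha.ne' (by positivity), hsplit, hflip, mul_assoc]
    gcongr
    rw [div_mul_eq_mul_div]
    gcongr
    nlinarith
  · have hX : 0 ≤ T ^ (1 - a) := by positivity
    refine (kernelIntegral_le a hT0 hT1.le).trans ?_
    rw [integral_rpow_neg_of_ne_one ha.ne' hT0, hflip, add_mul, div_mul_eq_mul_div, one_mul]
    gcongr
    linarith

lemma comparableOnUnitInterval_kernelIntegral_one : ComparableOnUnitInterval (kernelIntegral 1) fun T => log (2 / T) := by
  have hlog2 := log_pos one_lt_two
  refine .of_bounds (c := exp (-2)) (C := 1 / log 2 + 1) (exp_pos _)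
    (log_pos (by norm_num)) fun T hT0 hT1 => ⟨?_, ?_⟩
  · have h := exp_neg_two_mul_integral_rpow_le 1 hT0 (by linarith)
    rwa [integral_rpow_neg_one (by positivity), one_div_div] at h
  · have hlogT : 0 ≤ log (1 / T) := log_nonneg (by rw [le_div_iff₀ hT0]; linarith)
    have hsplit : log (2 / T) = log 2 + log (1 / T) := by
      rw [← log_mul two_ne_zero (by positivity), mul_one_div]
    refine (kernelIntegral_le 1 hT0 hT1.le).trans ?_
    rw [integral_rpow_neg_one hT0, Nat.ceil_one, Nat.factorial_one, Nat.cast_one, sub_self,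
      rpow_zero, one_mul, add_mul, hsplit, one_div_mul_eq_div, add_div, div_self hlog2.ne']
    linarith [div_nonneg hlogT hlog2.le]

lemma comparableOnUnitInterval_kernelIntegral_of_lt_one {a : ℝ} (ha : a < 1) :
    ComparableOnUnitInterval (kernelIntegral a) fun _ => 1 := by
  have ha' : 0 < 1 - a := by linarith
  have hK : (2 : ℝ) ^ (a - 1) < 1 := rpow_lt_one_of_one_lt_of_neg one_lt_two (by linarith)
  refine .of_bounds (c := exp (-2) * ((1 - 2 ^ (a - 1)) / (1 - a)))
    (C := ⌈a⌉₊ ! + 1 / (1 - a)) (mul_pos (exp_pos _) (div_pos (by linarith) ha'))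
    one_pos fun T hT0 hT1 => ⟨?_, ?_⟩
  · have hsplit : (T / 2) ^ (1 - a) ≤ 2 ^ (a - 1) := by
      calc (T / 2) ^ (1 - a) ≤ 2⁻¹ ^ (1 - a) := by gcongr; linarith
        _ = 2 ^ (a - 1) := by rw [inv_rpow zero_le_two, ← rpow_neg zero_le_two, neg_sub]
    refine le_trans ?_ (exp_neg_two_mul_integral_rpow_le a hT0 (by linarith))
    rw [integral_rpow_neg_of_ne_one ha.ne (by positivity), mul_one]
    gcongr
  · have hX : T ^ (1 - a) ≤ 1 := rpow_le_one hT0.le hT1.le ha'.le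
    refine (kernelIntegral_le a hT0 hT1.le).trans ?_
    rw [integral_rpow_neg_of_ne_one ha.ne hT0, mul_one]
    gcongr
    · exact mul_le_of_le_one_right (by positivity) hX
    · linarith [rpow_nonneg hT0.le (1 - a)]

/-- Two-sided bounds for `J(T) = ∫₀¹ ζ^{-a} exp(−T/ζ) dζ`, `0 < T < 1`:
`J(T) ≍ T^{1−a}` if `a > 1`, `J(T) ≍ log(2/T)` if `a = 1`, and `J(T) ≍ 1` if `a < 1`,
with implied constants depending only on `a`. -/
theorem stmt8 (a : ℝ) :
    ∃ c C : ℝ, 0 < c ∧ c ≤ C ∧ ∀ T : ℝ, 0 < T → T < 1 →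
      ((1 < a →
          c * T ^ (1 - a) ≤ (∫ ζ in Set.Ioo (0:ℝ) 1, ζ ^ (-a) * Real.exp (-T / ζ)) ∧
          (∫ ζ in Set.Ioo (0:ℝ) 1, ζ ^ (-a) * Real.exp (-T / ζ)) ≤ C * T ^ (1 - a)) ∧
        (a = 1 →
          c * Real.log (2 / T) ≤ (∫ ζ in Set.Ioo (0:ℝ) 1, ζ ^ (-a) * Real.exp (-T / ζ)) ∧
          (∫ ζ in Set.Ioo (0:ℝ) 1, ζ ^ (-a) * Real.exp (-T / ζ)) ≤ C * Real.log (2 / T)) ∧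
        (a < 1 →
          c ≤ (∫ ζ in Set.Ioo (0:ℝ) 1, ζ ^ (-a) * Real.exp (-T / ζ)) ∧
          (∫ ζ in Set.Ioo (0:ℝ) 1, ζ ^ (-a) * Real.exp (-T / ζ)) ≤ C)) := by
  rcases lt_trichotomy a 1 with ha | rfl | ha
  · obtain ⟨c, C, hc, hcC, h⟩ := comparableOnUnitInterval_kernelIntegral_of_lt_one ha
    refine ⟨c, C, hc, hcC, fun T hT0 hT1 => ⟨fun h' => absurd ha h'.not_gt,
      fun h' => absurd h' ha.ne, fun _ => ?_⟩⟩
    simpa only [mul_one, kernelIntegral] using h T hT0 hT1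
  · obtain ⟨c, C, hc, hcC, h⟩ := comparableOnUnitInterval_kernelIntegral_one
    exact ⟨c, C, hc, hcC, fun T hT0 hT1 => ⟨fun h' => absurd h' (lt_irrefl 1),
      fun _ => h T hT0 hT1, fun h' => absurd h' (lt_irrefl 1)⟩⟩
  · obtain ⟨c, C, hc, hcC, h⟩ := comparableOnUnitInterval_kernelIntegral_of_one_lt ha
    exact ⟨c, C, hc, hcC, fun T hT0 hT1 => ⟨fun _ => h T hT0 hT1,
      fun h' => absurd h' ha.ne', fun h' => absurd ha h'.not_gt⟩⟩
end

section
/- Let n ≥ 1. There exists a constant C depending only on n (in particular, independent of α) such that for every multi-index α ∈ (-1/2,∞)^n, every ξ ∈ (0,1) and all x, y ∈ (0,∞)^n one has G^H_{α,t(ξ)}(x,y) ≤ C ((1−ξ²)/ξ)^{n/2} exp( −|x−y|²/(4ξ) − ξ|x+y|²/4 ). -/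
open MeasureTheory
open scoped ENNReal NNReal

/-- Euclidean norm of `x ∈ ℝ^n` (realized as `Fin n → ℝ`). -/
noncomputable def eunorm {n : ℕ} (x : Fin n → ℝ) : ℝ := Real.sqrt (∑ i, x i ^ 2)

/-- The `n`-dimensional Laguerre heat kernel of Hermite type `G^H_{α,t}(x,y)`. -/
noncomputable def lagHeatHn {n : ℕ} (α : Fin n → ℝ) (t : ℝ) (x y : Fin n → ℝ) : ℝ :=
  (∏ i, (x i * y i) ^ (α i + 1/2)) * Real.sinh (2 * t) ^ (-(n:ℝ) - ∑ i, α i) *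
    ∫ s in Set.univ.pi fun _ : Fin n => Set.Icc (-1:ℝ) 1,
      Real.exp (-(1/2) * (Real.cosh (2 * t) / Real.sinh (2 * t)) * (eunorm x ^ 2 + eunorm y ^ 2)
          - (∑ i, x i * y i * s i) / Real.sinh (2 * t)) *
        ∏ i, ((1 - s i ^ 2) ^ (α i - 1/2) /
          (2 ^ (α i) * Real.sqrt Real.pi * Real.Gamma (α i + 1/2)))

/-- Meda's change of variable `t(ξ) = (1/2) log((1+ξ)/(1−ξ))`, `ξ ∈ (0,1)`. -/
noncomputable def meda (ξ : ℝ) : ℝ := (1/2) * Real.log ((1 + ξ) / (1 - ξ))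

/-!
Both the kernel and the bound factor over the coordinates, so it suffices to treat `n = 1`.
With `σ = sinh 2t`, `z = uv/σ` and `b = a + 1/2`, the exponent of the integrand is
`E - z(1 + s)` where `E = -½ coth(2t)(u² + v²) + uv/σ`. Writing
`(1 - s²)^(b-1) = (1 + s)^(b-1) (1 - s)^(b-1)`, on each half of `[-1, 1]` one factor has its
base in `[1, 2]` and is at most `2^b`; for `s ≥ 0` also `e^(-z(1+s)) ≤ e^(-z(1-s))`. This
bounds the integrand by `2^b` times a Gamma integrand in `1 ± s`, so the `s`-integral is at
most `2^(b+1) Γ(b) z^(-b)`. The powers of `uv` and `Γ(b)` then cancel against the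
prefactors, leaving `2√2 / √(πσ) · e^E`, and Meda's substitution gives `σ = 2ξ/(1 - ξ²)` and
`E = -(u - v)²/(4ξ) - ξ(u + v)²/4`. The constant is `C = (2/√π)^n`.
-/

open Set Real

lemma rpow_sub_one_le_two_rpow {b u : ℝ} (hb : 0 < b) (h1 : 1 ≤ u) (h2 : u ≤ 2) :
    u ^ (b - 1) ≤ 2 ^ b :=
  (rpow_le_rpow_of_exponent_le h1 (by linarith)).trans
    (rpow_le_rpow (by linarith) h2 hb.le)

lemma exp_mul_one_sub_sq_rpow_le {b z s : ℝ} (hb : 0 < b) (hz : 0 ≤ z)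
    (hs : s ∈ Icc (-1 : ℝ) 1) :
    exp (-(z * (1 + s))) * (1 - s ^ 2) ^ (b - 1) ≤
      2 ^ b * ((1 + s) ^ (b - 1) * exp (-(z * (1 + s))) +
        (1 - s) ^ (b - 1) * exp (-(z * (1 - s)))) := by
  obtain ⟨hs₁, hs₂⟩ := hs
  have hsplit : (1 - s ^ 2) ^ (b - 1) = (1 + s) ^ (b - 1) * (1 - s) ^ (b - 1) := by
    rw [← mul_rpow (by linarith) (by linarith)]; ring_nf
  have hp : 0 ≤ (1 + s) ^ (b - 1) := rpow_nonneg (by linarith) _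
  have hm : 0 ≤ (1 - s) ^ (b - 1) := rpow_nonneg (by linarith) _
  rw [hsplit]
  rcases le_total s 0 with hneg | hpos
  · have hm2 := rpow_sub_one_le_two_rpow hb (u := 1 - s) (by linarith) (by linarith)
    have hle : (1 + s) ^ (b - 1) * exp (-(z * (1 + s))) * (1 - s) ^ (b - 1) ≤
        (1 + s) ^ (b - 1) * exp (-(z * (1 + s))) * 2 ^ b := by gcongr
    nlinarith [mul_nonneg hm (exp_pos (-(z * (1 - s)))).le]
  · have hp2 := rpow_sub_one_le_two_rpow hb (u := 1 + s) (by linarith) (by linarith)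
    have hexp : exp (-(z * (1 + s))) ≤ exp (-(z * (1 - s))) := by
      gcongr; nlinarith
    have hle : exp (-(z * (1 + s))) * ((1 + s) ^ (b - 1) * (1 - s) ^ (b - 1)) ≤
        exp (-(z * (1 - s))) * (2 ^ b * (1 - s) ^ (b - 1)) := by gcongr
    nlinarith [mul_nonneg hp (exp_pos (-(z * (1 + s)))).le]

lemma integrableOn_rpow_sub_one_mul_exp_neg_mul {b z : ℝ} (hb : 0 < b) (hz : 0 < z) :
    IntegrableOn (fun u : ℝ => u ^ (b - 1) * exp (-(z * u))) (Ioi 0) := by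
  simpa only [rpow_one, neg_mul] using
    integrableOn_rpow_mul_exp_neg_mul_rpow (s := b - 1) (p := 1) (by linarith) one_pos hz

lemma intervalIntegral_zero_two_rpow_mul_exp_le {b z : ℝ} (hb : 0 < b) (hz : 0 < z) :
    ∫ u in (0 : ℝ)..2, u ^ (b - 1) * exp (-(z * u)) ≤ (1 / z) ^ b * Gamma b := by
  rw [intervalIntegral.integral_of_le zero_le_two, ← integral_rpow_mul_exp_neg_mul_Ioi hb hz]
  refine setIntegral_mono_set (integrableOn_rpow_sub_one_mul_exp_neg_mul hb hz) ?_
    (.of_forall Ioc_subset_Ioi_self)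
  filter_upwards [self_mem_ae_restrict measurableSet_Ioi] with u hu
  exact mul_nonneg (rpow_nonneg (le_of_lt hu) _) (exp_pos _).le

lemma integral_Icc_exp_mul_one_sub_sq_rpow_le {b z : ℝ} (hb : 0 < b) (hz : 0 < z) :
    ∫ s in Icc (-1 : ℝ) 1, exp (-(z * (1 + s))) * (1 - s ^ 2) ^ (b - 1) ≤
      2 ^ (b + 1) * ((1 / z) ^ b * Gamma b) := by
  set φ : ℝ → ℝ := fun u => u ^ (b - 1) * exp (-(z * u))
  have hφ : IntervalIntegrable φ volume 0 2 :=
    (intervalIntegrable_iff_integrableOn_Ioc_of_le zero_le_two).2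
      ((integrableOn_rpow_sub_one_mul_exp_neg_mul hb hz).mono_set Ioc_subset_Ioi_self)
  have hφ_add : IntervalIntegrable (fun s => φ (1 + s)) volume (-1) 1 := by
    have h := hφ.comp_add_right 1
    norm_num [add_comm] at h ⊢
    exact h
  have hφ_sub : IntervalIntegrable (fun s => φ (1 - s)) volume (-1) 1 := by
    have h := (hφ.comp_sub_left 1).symm
    norm_num at h
    exact h
  have hI_add : ∫ s in (-1 : ℝ)..1, φ (1 + s) = ∫ u in (0 : ℝ)..2, φ u := by
    simp only [add_comm (1 : ℝ)]
    rw [intervalIntegral.integral_comp_add_right φ 1]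
    norm_num
  have hI_sub : ∫ s in (-1 : ℝ)..1, φ (1 - s) = ∫ u in (0 : ℝ)..2, φ u := by
    rw [intervalIntegral.integral_comp_sub_left φ 1]
    norm_num
  calc ∫ s in Icc (-1 : ℝ) 1, exp (-(z * (1 + s))) * (1 - s ^ 2) ^ (b - 1)
      ≤ ∫ s in Icc (-1 : ℝ) 1, 2 ^ b * (φ (1 + s) + φ (1 - s)) := by
        refine integral_mono_of_nonneg ?_
          ((intervalIntegrable_iff_integrableOn_Icc_of_le (by norm_num)).1
            ((hφ_add.add hφ_sub).const_mul _)) ?_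
        all_goals filter_upwards [self_mem_ae_restrict measurableSet_Icc] with s hs
        · have : 0 ≤ 1 - s ^ 2 := by nlinarith [hs.1, hs.2]
          exact mul_nonneg (exp_pos _).le (rpow_nonneg this _)
        · exact exp_mul_one_sub_sq_rpow_le hb hz.le hs
    _ = 2 ^ b * (2 * ∫ u in (0 : ℝ)..2, φ u) := by
        rw [integral_Icc_eq_integral_Ioc, ← intervalIntegral.integral_of_le (by norm_num),
          intervalIntegral.integral_const_mul, intervalIntegral.integral_add hφ_add hφ_sub,
          hI_add, hI_sub, two_mul]
    _ ≤ 2 ^ (b + 1) * ((1 / z) ^ b * Gamma b) := by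
        rw [rpow_add_one two_ne_zero, mul_assoc]
        gcongr
        exact intervalIntegral_zero_two_rpow_mul_exp_le hb hz

noncomputable def lagHeatH1 (a t u v : ℝ) : ℝ :=
  (u * v) ^ (a + 1/2) * sinh (2 * t) ^ (-1 - a) *
    ∫ s in Icc (-1:ℝ) 1,
      exp (-(1/2) * (cosh (2 * t) / sinh (2 * t)) * (u ^ 2 + v ^ 2) - u * v * s / sinh (2 * t)) *
        ((1 - s ^ 2) ^ (a - 1/2) / (2 ^ a * √π * Gamma (a + 1/2)))

lemma lagHeatH1_nonneg {a t u v : ℝ} (ha : -(1/2) < a) (ht : 0 ≤ t) (hu : 0 ≤ u) (hv : 0 ≤ v) :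
    0 ≤ lagHeatH1 a t u v := by
  have hσ : 0 ≤ sinh (2 * t) := sinh_nonneg_iff.2 (by linarith)
  have hΓ := Gamma_pos_of_pos (show 0 < a + 1/2 by linarith)
  refine mul_nonneg (by positivity) (setIntegral_nonneg measurableSet_Icc fun s hs => ?_)
  have : 0 ≤ 1 - s ^ 2 := by nlinarith [hs.1, hs.2]
  positivity

lemma lagHeatH1_le {a t u v : ℝ} (ha : -(1/2) < a) (ht : 0 < t) (hu : 0 < u) (hv : 0 < v) :
    lagHeatH1 a t u v ≤ 2 * √2 / √π / √(sinh (2 * t)) *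
      exp (-(1/2) * (cosh (2 * t) / sinh (2 * t)) * (u ^ 2 + v ^ 2) + u * v / sinh (2 * t)) := by
  set σ := sinh (2 * t)
  set E := -(1/2) * (cosh (2 * t) / σ) * (u ^ 2 + v ^ 2) + u * v / σ
  have hσ : 0 < σ := sinh_pos_iff.2 (by linarith)
  have hb : 0 < a + 1/2 := by linarith
  have huv : 0 < u * v := mul_pos hu hv
  have hI : ∫ s in Icc (-1:ℝ) 1,
      exp (-(1/2) * (cosh (2 * t) / σ) * (u ^ 2 + v ^ 2) - u * v * s / σ) *
        ((1 - s ^ 2) ^ (a - 1/2) / (2 ^ a * √π * Gamma (a + 1/2))) =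
      exp E / (2 ^ a * √π * Gamma (a + 1/2)) *
        ∫ s in Icc (-1:ℝ) 1, exp (-(u * v / σ * (1 + s))) * (1 - s ^ 2) ^ (a + 1/2 - 1) := by
    rw [← integral_const_mul]
    refine setIntegral_congr_fun measurableSet_Icc fun s _ => ?_
    have hexp : -(1/2) * (cosh (2 * t) / σ) * (u ^ 2 + v ^ 2) - u * v * s / σ =
        E + -(u * v / σ * (1 + s)) := by ring
    rw [hexp, exp_add, show a + 1/2 - 1 = a - 1/2 by ring]
    ring
  have hbound := integral_Icc_exp_mul_one_sub_sq_rpow_le hb (div_pos huv hσ)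
  have hconst : (u * v) ^ (a + 1/2) * σ ^ (-1 - a) / (2 ^ a * √π * Gamma (a + 1/2)) *
      (2 ^ (a + 1/2 + 1) * ((1 / (u * v / σ)) ^ (a + 1/2) * Gamma (a + 1/2))) =
      2 * √2 / √π / √σ := by
    have hσpow : σ ^ (-1 - a) = (σ ^ (a + 1/2))⁻¹ * (√σ)⁻¹ := by
      rw [sqrt_eq_rpow, ← rpow_neg hσ.le, ← rpow_neg hσ.le, ← rpow_add hσ]; ring_nf
    have htwo : (2 : ℝ) ^ (a + 1/2 + 1) = 2 ^ a * √2 * 2 := by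
      rw [sqrt_eq_rpow, ← rpow_add two_pos, rpow_add_one two_ne_zero]
    rw [hσpow, htwo, one_div_div, div_rpow hσ.le huv.le]
    have hΓ := (Gamma_pos_of_pos hb).ne'
    generalize Gamma (a + 1/2) = Γ at hΓ ⊢
    field_simp
  calc lagHeatH1 a t u v
      = (u * v) ^ (a + 1/2) * σ ^ (-1 - a) / (2 ^ a * √π * Gamma (a + 1/2)) * exp E *
          ∫ s in Icc (-1:ℝ) 1, exp (-(u * v / σ * (1 + s))) * (1 - s ^ 2) ^ (a + 1/2 - 1) := by
        rw [lagHeatH1, hI]; ring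
    _ ≤ (u * v) ^ (a + 1/2) * σ ^ (-1 - a) / (2 ^ a * √π * Gamma (a + 1/2)) * exp E *
          (2 ^ (a + 1/2 + 1) * ((1 / (u * v / σ)) ^ (a + 1/2) * Gamma (a + 1/2))) := by
        gcongr
    _ = 2 * √2 / √π / √σ * exp E := by
        rw [← hconst]; ring

lemma sinh_two_mul_meda {ξ : ℝ} (h₀ : -1 < ξ) (h₁ : ξ < 1) :
    sinh (2 * meda ξ) = 2 * ξ / (1 - ξ ^ 2) := by
  have h : 0 < 1 - ξ := by linarith
  have h' : 0 < 1 + ξ := by linarith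
  rw [meda, ← mul_assoc, mul_one_div_cancel two_ne_zero, one_mul, sinh_log (div_pos h' h),
    inv_div, show 1 - ξ ^ 2 = (1 + ξ) * (1 - ξ) by ring]
  field_simp
  ring

lemma cosh_two_mul_meda {ξ : ℝ} (h₀ : -1 < ξ) (h₁ : ξ < 1) :
    cosh (2 * meda ξ) = (1 + ξ ^ 2) / (1 - ξ ^ 2) := by
  have h : 0 < 1 - ξ := by linarith
  have h' : 0 < 1 + ξ := by linarith
  rw [meda, ← mul_assoc, mul_one_div_cancel two_ne_zero, one_mul, cosh_log (div_pos h' h),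
    inv_div, show 1 - ξ ^ 2 = (1 + ξ) * (1 - ξ) by ring]
  field_simp
  ring

lemma meda_pos {ξ : ℝ} (h₀ : 0 < ξ) (h₁ : ξ < 1) : 0 < meda ξ :=
  mul_pos one_half_pos (log_pos ((one_lt_div (by linarith)).2 (by linarith)))

lemma lagHeatH1_meda_le {a ξ u v : ℝ} (ha : -(1/2) < a) (h₀ : 0 < ξ) (h₁ : ξ < 1)
    (hu : 0 < u) (hv : 0 < v) :
    lagHeatH1 a (meda ξ) u v ≤
      2 / √π * √((1 - ξ ^ 2) / ξ) * exp (-(u - v) ^ 2 / (4 * ξ) - ξ * (u + v) ^ 2 / 4) := by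
  have hξ : 0 < 1 - ξ ^ 2 := by nlinarith
  have h := lagHeatH1_le ha (meda_pos h₀ h₁) hu hv
  rw [sinh_two_mul_meda (by linarith) h₁, cosh_two_mul_meda (by linarith) h₁] at h
  refine h.trans_eq ?_
  congr 2
  · rw [sqrt_div (by positivity), sqrt_div hξ.le, sqrt_mul zero_le_two]
    field_simp
  · field_simp
    ring

lemma setIntegral_univ_pi_prod {ι 𝕜 : Type*} [Fintype ι] [RCLike 𝕜] {X : ι → Type*}
    [∀ i, MeasurableSpace (X i)] (μ : ∀ i, Measure (X i)) [∀ i, SigmaFinite (μ i)]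
    (s : ∀ i, Set (X i)) (f : ∀ i, X i → 𝕜) :
    ∫ x in univ.pi s, ∏ i, f i (x i) ∂Measure.pi μ = ∏ i, ∫ x in s i, f i x ∂μ i := by
  rw [Measure.restrict_pi_pi]
  exact integral_fintype_prod_eq_prod f

lemma eunorm_sq {n : ℕ} (x : Fin n → ℝ) : eunorm x ^ 2 = ∑ i, x i ^ 2 :=
  sq_sqrt (Finset.sum_nonneg fun i _ => sq_nonneg (x i))

lemma lagHeatHn_eq_prod {n : ℕ} (α : Fin n → ℝ) {t : ℝ} (ht : 0 < t) (x y : Fin n → ℝ) :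
    lagHeatHn α t x y = ∏ i, lagHeatH1 (α i) t (x i) (y i) := by
  have hσ : 0 < sinh (2 * t) := sinh_pos_iff.2 (by linarith)
  simp only [lagHeatHn, lagHeatH1, Finset.prod_mul_distrib]
  rw [← setIntegral_univ_pi_prod (𝕜 := ℝ) (fun _ => volume), ← rpow_sum_of_pos hσ]
  congr 2
  · simp [Finset.sum_sub_distrib]
  · funext s
    rw [Finset.prod_mul_distrib, ← exp_sum, eunorm_sq, eunorm_sq, Finset.sum_sub_distrib, ← Finset.sum_div, ← Finset.mul_sum, Finset.sum_add_distrib]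

lemma sum_gaussian_exponent {n : ℕ} (ξ : ℝ) (x y : Fin n → ℝ) :
    ∑ i, (-(x i - y i) ^ 2 / (4 * ξ) - ξ * (x i + y i) ^ 2 / 4) =
      -(eunorm (x - y)) ^ 2 / (4 * ξ) - ξ * (eunorm (x + y)) ^ 2 / 4 := by
  rw [eunorm_sq, eunorm_sq, Finset.sum_sub_distrib, ← Finset.sum_div, ← Finset.sum_div,
    Finset.sum_neg_distrib, ← Finset.mul_sum]
  rfl

theorem stmt9_general (n : ℕ) :
    ∃ C : ℝ, 0 < C ∧ ∀ α : Fin n → ℝ, (∀ i, -(1/2) < α i) → ∀ ξ ∈ Set.Ioo (0:ℝ) 1,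
      ∀ x y : Fin n → ℝ, (∀ i, 0 < x i) → (∀ i, 0 < y i) →
        lagHeatHn α (meda ξ) x y ≤
          C * ((1 - ξ ^ 2) / ξ) ^ ((n:ℝ) / 2) *
            Real.exp (-(eunorm (x - y)) ^ 2 / (4 * ξ) - ξ * (eunorm (x + y)) ^ 2 / 4) := by
  refine ⟨(2 / √π) ^ n, by positivity, ?_⟩
  rintro α hα ξ ⟨h₀, h₁⟩ x y hx hy
  have hq : 0 ≤ (1 - ξ ^ 2) / ξ := div_nonneg (by nlinarith) h₀.le
  have hsqrt : √((1 - ξ ^ 2) / ξ) ^ n = ((1 - ξ ^ 2) / ξ) ^ ((n:ℝ) / 2) := by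
    rw [sqrt_eq_rpow, ← rpow_natCast, ← rpow_mul hq]
    ring_nf
  rw [lagHeatHn_eq_prod α (meda_pos h₀ h₁)]
  calc ∏ i, lagHeatH1 (α i) (meda ξ) (x i) (y i)
      ≤ ∏ i, (2 / √π * √((1 - ξ ^ 2) / ξ) *
          exp (-(x i - y i) ^ 2 / (4 * ξ) - ξ * (x i + y i) ^ 2 / 4)) :=
        Finset.prod_le_prod
          (fun i _ => lagHeatH1_nonneg (hα i) (meda_pos h₀ h₁).le (hx i).le (hy i).le)
          (fun i _ => lagHeatH1_meda_le (hα i) h₀ h₁ (hx i) (hy i))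
    _ = _ := by
        rw [Finset.prod_mul_distrib, Finset.prod_mul_distrib, Finset.prod_const,
          Finset.prod_const, Finset.card_univ, Fintype.card_fin, ← exp_sum,
          sum_gaussian_exponent, hsqrt]

/-- there is `C = C(n)` (independent of `α`) such that for every
`α ∈ (-1/2,∞)^n`, every `ξ ∈ (0,1)` and all `x, y ∈ (0,∞)^n`,
`G^H_{α,t(ξ)}(x,y) ≤ C ((1−ξ²)/ξ)^{n/2} exp(−|x−y|²/(4ξ) − ξ|x+y|²/4)`. -/
theorem stmt9 (n : ℕ) (hn : 1 ≤ n) :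
    ∃ C : ℝ, 0 < C ∧ ∀ α : Fin n → ℝ, (∀ i, -(1/2) < α i) → ∀ ξ ∈ Set.Ioo (0:ℝ) 1,
      ∀ x y : Fin n → ℝ, (∀ i, 0 < x i) → (∀ i, 0 < y i) →
        lagHeatHn α (meda ξ) x y ≤
          C * ((1 - ξ ^ 2) / ξ) ^ ((n:ℝ) / 2) *
            Real.exp (-(eunorm (x - y)) ^ 2 / (4 * ξ) - ξ * (eunorm (x + y)) ^ 2 / 4) :=
  stmt9_general n
end

section
/- Let α ≥ −1/2, λ > 0, b ≥ 1 and 0 < B < A. Then ∫₀¹ (1−s)^{α+b−1/2} (A−Bs)^{−(α+b+λ+1/2)} ds ≤ (Γ(b)Γ(λ)/Γ(b+λ)) · A^{−(α+1/2)} · B^{−b} · (A−B)^{−λ}. -/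
/-!
Since `(1 - s) / (A - B s) ≤ 1 / A` on `[0, 1]` and `α + 1/2 ≥ 0`, the integrand is at most
`A^{-(α+1/2)} (1 - s)^{b-1} (A - B s)^{-(b+λ)}`. The Möbius substitution
`s = (B - A t) / (B (1 - t))`, which maps `[0, B/A]` onto `[0, 1]`, turns the integral of the
latter into `B^{-b} (A - B)^{-λ} ∫₀^{B/A} t^{b-1} (1 - t)^{λ-1} dt`, an incomplete Beta integral,
which is at most `B(b, λ) = Γ(b) Γ(λ) / Γ(b + λ)`.
-/

open MeasureTheory Set ProbabilityTheory

lemma integral_rpow_mul_one_sub_rpow {a b : ℝ} (ha : 0 < a) (hb : 0 < b) :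
    ∫ x in (0:ℝ)..1, x ^ (a - 1) * (1 - x) ^ (b - 1) = beta a b := by
  rw [beta_eq_betaIntegralReal a b ha hb, Complex.betaIntegral,
    ← Complex.ofReal_re (∫ x in (0:ℝ)..1, _), ← intervalIntegral.integral_ofReal]
  congr 1
  refine intervalIntegral.integral_congr fun x hx => ?_
  rw [uIcc_of_le zero_le_one] at hx
  simp [Complex.ofReal_cpow hx.1, Complex.ofReal_cpow (sub_nonneg.2 hx.2)]

lemma intervalIntegrable_rpow_mul_one_sub_rpow {a b : ℝ} (ha : 0 < a) (hb : 0 < b) :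
    IntervalIntegrable (fun x : ℝ => x ^ (a - 1) * (1 - x) ^ (b - 1)) volume 0 1 :=
  -- a non-integrable function would have integral `0`, but `beta a b > 0`
  intervalIntegral.intervalIntegrable_of_integral_ne_zero <| by
    rw [integral_rpow_mul_one_sub_rpow ha hb]; exact (beta_pos ha hb).ne'

lemma integral_rpow_mul_one_sub_rpow_le_beta {a b x : ℝ} (ha : 0 < a) (hb : 0 < b)
    (hx0 : 0 ≤ x) (hx1 : x ≤ 1) :
    ∫ t in (0:ℝ)..x, t ^ (a - 1) * (1 - t) ^ (b - 1) ≤ beta a b := by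
  rw [← integral_rpow_mul_one_sub_rpow ha hb]
  refine intervalIntegral.integral_mono_interval le_rfl hx0 hx1 ?_
    (intervalIntegrable_rpow_mul_one_sub_rpow ha hb)
  filter_upwards [ae_restrict_mem measurableSet_Ioc] with t ht
  exact mul_nonneg (Real.rpow_nonneg ht.1.le _) (Real.rpow_nonneg (sub_nonneg.2 ht.2) _)

section Substitution

variable {A B : ℝ}

lemma hasDerivAt_sub_mul_div_mul_one_sub (hB : B ≠ 0) {t : ℝ} (ht : t ≠ 1) :
    HasDerivAt (fun t => (B - A * t) / (B * (1 - t))) ((B - A) / (B * (1 - t) ^ 2)) t := by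
  have hu : 1 - t ≠ 0 := sub_ne_zero.2 ht.symm
  have hden : B * (1 - t) ≠ 0 := mul_ne_zero hB hu
  refine (((hasDerivAt_id t).const_mul A).const_sub B |>.div
    (((hasDerivAt_id t).const_sub 1).const_mul B) hden).congr_deriv ?_
  simp only [id]
  field_simp
  ring

lemma sub_mul_div_mul_one_sub_mem_Icc (hB : 0 < B) (hBA : B < A) {t : ℝ}
    (ht : t ∈ Icc 0 (B / A)) : (B - A * t) / (B * (1 - t)) ∈ Icc 0 1 := by
  have hA : 0 < A := hB.trans hBA
  have htA : A * t ≤ B := mul_comm A t ▸ (le_div_iff₀ hA).1 ht.2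
  have hden : 0 < B * (1 - t) := by nlinarith [ht.1]
  refine ⟨div_nonneg (by linarith) hden.le, (div_le_one hden).2 ?_⟩
  nlinarith [ht.1]

lemma continuousOn_one_sub_rpow_mul_sub_mul_rpow (hB : 0 ≤ B) (hBA : B < A) {p : ℝ} (hp : 0 ≤ p)
    (q : ℝ) : ContinuousOn (fun s => (1 - s) ^ p * (A - B * s) ^ q) (Icc 0 1) := by
  refine ((continuousOn_const.sub continuousOn_id).rpow_const fun _ _ => Or.inr hp).mul
    ((continuousOn_const.sub (continuousOn_const.mul continuousOn_id)).rpow_const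
      fun s hs => Or.inl ?_)
  have : B * s ≤ B := mul_le_of_le_one_right hB hs.2
  exact (sub_pos.2 (this.trans_lt hBA)).ne'

lemma integrand_comp_sub_mul_div_mul_one_sub (hB : 0 < B) (hBA : B < A) (b l : ℝ) {t : ℝ}
    (ht0 : 0 < t) (ht1 : t < 1) :
    (A - B) / (B * (1 - t) ^ 2) * ((1 - (B - A * t) / (B * (1 - t))) ^ (b - 1)
      * (A - B * ((B - A * t) / (B * (1 - t)))) ^ (-(b + l)))
      = B ^ (-b) * (A - B) ^ (-l) * (t ^ (b - 1) * (1 - t) ^ (l - 1)) := by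
  have hD : 0 < A - B := sub_pos.2 hBA
  have hu : 0 < 1 - t := sub_pos.2 ht1
  have e1 : 1 - (B - A * t) / (B * (1 - t)) = (A - B) * t / (B * (1 - t)) := by
    field_simp; ring
  have e2 : A - B * ((B - A * t) / (B * (1 - t))) = (A - B) / (1 - t) := by
    field_simp; ring
  rw [e1, e2, ← Real.exp_log (by positivity : 0 < (A - B) / (B * (1 - t) ^ 2) * _),
    ← Real.exp_log (by positivity : 0 < B ^ (-b) * (A - B) ^ (-l) * _)]
  congr 1
  simp (disch := positivity) only [Real.log_mul, Real.log_div, Real.log_rpow, Real.log_pow]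
  push_cast
  ring

lemma integral_one_sub_rpow_mul_sub_mul_rpow (hB : 0 < B) (hBA : B < A) {b : ℝ} (hb : 1 ≤ b)
    (l : ℝ) :
    ∫ s in (0:ℝ)..1, (1 - s) ^ (b - 1) * (A - B * s) ^ (-(b + l))
      = B ^ (-b) * (A - B) ^ (-l) * ∫ t in (0:ℝ)..B / A, t ^ (b - 1) * (1 - t) ^ (l - 1) := by
  have hA : 0 < A := hB.trans hBA
  have hBA1 : B / A < 1 := (div_lt_one hA).2 hBA
  have hIcc : uIcc 0 (B / A) = Icc 0 (B / A) := uIcc_of_le (div_nonneg hB.le hA.le)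
  have hne : ∀ t ∈ Icc 0 (B / A), 1 - t ≠ 0 := fun t ht => (sub_pos.2 (ht.2.trans_lt hBA1)).ne'
  have hsubst := intervalIntegral.integral_comp_mul_deriv'
    (g := fun s => (1 - s) ^ (b - 1) * (A - B * s) ^ (-(b + l)))
    (fun t ht => hasDerivAt_sub_mul_div_mul_one_sub hB.ne'
      (sub_ne_zero.1 (hne t (hIcc ▸ ht))).symm)
    (hIcc ▸ continuousOn_const.div (by fun_prop) fun t ht =>
      mul_ne_zero hB.ne' (pow_ne_zero 2 (hne t ht)))
    ((continuousOn_one_sub_rpow_mul_sub_mul_rpow hB.le hBA (sub_nonneg.2 hb) _).mono <|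
      image_subset_iff.2 fun t ht => sub_mul_div_mul_one_sub_mem_Icc hB hBA (hIcc ▸ ht))
  have h0 : (B - A * 0) / (B * (1 - 0)) = 1 := by simp [hB.ne']
  have h1 : (B - A * (B / A)) / (B * (1 - B / A)) = 0 := by field_simp; ring
  rw [h0, h1, intervalIntegral.integral_symm 0 1] at hsubst
  rw [← neg_neg (∫ s in (0:ℝ)..1, _), ← hsubst, ← intervalIntegral.integral_neg,
    ← intervalIntegral.integral_const_mul]
  refine intervalIntegral.integral_congr_ae (ae_of_all _ fun t ht => ?_)
  rw [uIoc_of_le (div_nonneg hB.le hA.le)] at ht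
  rw [← integrand_comp_sub_mul_div_mul_one_sub hB hBA b l ht.1 (ht.2.trans_lt hBA1)]
  simp only [Function.comp_apply]
  ring

end Substitution

lemma one_sub_rpow_mul_sub_mul_rpow_neg_le {A B c s : ℝ} (hc : 0 ≤ c) (hA : 0 < A) (hBA : B ≤ A)
    (hs0 : 0 ≤ s) (hs1 : s ≤ 1) (hv : 0 < A - B * s) :
    (1 - s) ^ c * (A - B * s) ^ (-c) ≤ A ^ (-c) := by
  rw [Real.rpow_neg hv.le, ← div_eq_mul_inv, ← Real.div_rpow (sub_nonneg.2 hs1) hv.le,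
    Real.rpow_neg hA.le, ← Real.inv_rpow hA.le]
  refine Real.rpow_le_rpow (div_nonneg (sub_nonneg.2 hs1) hv.le) ?_ hc
  rw [div_le_iff₀ hv, inv_mul_eq_div, le_div_iff₀ hA]
  nlinarith

lemma one_sub_rpow_add_mul_sub_mul_rpow_neg_add_le {A B c p q s : ℝ} (hc : 0 ≤ c) (hA : 0 < A)
    (hBA : B ≤ A) (hs0 : 0 ≤ s) (hs1 : s < 1) (hv : 0 < A - B * s) :
    (1 - s) ^ (c + p) * (A - B * s) ^ (-(c + q))
      ≤ A ^ (-c) * ((1 - s) ^ p * (A - B * s) ^ (-q)) := by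
  have hu : 0 < 1 - s := sub_pos.2 hs1
  calc (1 - s) ^ (c + p) * (A - B * s) ^ (-(c + q))
      = ((1 - s) ^ c * (A - B * s) ^ (-c)) * ((1 - s) ^ p * (A - B * s) ^ (-q)) := by
        rw [Real.rpow_add hu, neg_add, Real.rpow_add hv]
        ring
    _ ≤ A ^ (-c) * ((1 - s) ^ p * (A - B * s) ^ (-q)) := by
        gcongr
        exact one_sub_rpow_mul_sub_mul_rpow_neg_le hc hA hBA hs0 hs1.le hv

lemma integral_one_sub_rpow_add_mul_sub_mul_rpow_neg_add_le {A B c p : ℝ} (hc : 0 ≤ c)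
    (hB : 0 ≤ B) (hBA : B < A) (hp : 0 ≤ p) (q : ℝ) :
    ∫ s in Ioo (0:ℝ) 1, (1 - s) ^ (c + p) * (A - B * s) ^ (-(c + q))
      ≤ A ^ (-c) * ∫ s in (0:ℝ)..1, (1 - s) ^ p * (A - B * s) ^ (-q) := by
  have hA : 0 < A := hB.trans_lt hBA
  have hv : ∀ s ∈ Ioo (0:ℝ) 1, 0 < A - B * s := fun s hs =>
    sub_pos.2 ((mul_le_of_le_one_right hB hs.2.le).trans_lt hBA)
  rw [intervalIntegral.integral_of_le zero_le_one, integral_Ioc_eq_integral_Ioo,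
    ← integral_const_mul]
  refine integral_mono_of_nonneg ?_ ?_ ?_
  · filter_upwards [ae_restrict_mem measurableSet_Ioo] with s hs
    have := hv s hs
    have := sub_pos.2 hs.2
    positivity
  · refine Integrable.const_mul (IntegrableOn.mono_set ?_ Ioo_subset_Icc_self) _
    exact (continuousOn_one_sub_rpow_mul_sub_mul_rpow hB hBA hp (-q)).integrableOn_Icc
  · filter_upwards [ae_restrict_mem measurableSet_Ioo] with s hs
    exact one_sub_rpow_add_mul_sub_mul_rpow_neg_add_le hc hA hBA.le hs.1.le hs.2 (hv s hs)

/-- For `α ≥ −1/2`, `λ > 0`, `b ≥ 1` and `0 < B < A`,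
`∫₀¹ (1−s)^{α+b−1/2} (A−Bs)^{−(α+b+λ+1/2)} ds ≤ (Γ(b)Γ(λ)/Γ(b+λ)) A^{−(α+1/2)} B^{−b} (A−B)^{−λ}`. -/
theorem stmt13 (α lam b A B : ℝ) (hα : -(1/2) ≤ α) (hlam : 0 < lam) (hb : 1 ≤ b)
    (hB : 0 < B) (hBA : B < A) :
    (∫ s in Set.Ioo (0:ℝ) 1, (1 - s) ^ (α + b - 1/2) * (A - B * s) ^ (-(α + b + lam + 1/2))) ≤
      Real.Gamma b * Real.Gamma lam / Real.Gamma (b + lam) *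
        A ^ (-(α + 1/2)) * B ^ (-b) * (A - B) ^ (-lam) := by
  have hA : 0 < A := hB.trans hBA
  rw [show α + b - 1/2 = (α + 1/2) + (b - 1) by ring,
    show α + b + lam + 1/2 = (α + 1/2) + (b + lam) by ring]
  calc _ ≤ A ^ (-(α + 1/2)) * ∫ s in (0:ℝ)..1, (1 - s) ^ (b - 1) * (A - B * s) ^ (-(b + lam)) :=
        integral_one_sub_rpow_add_mul_sub_mul_rpow_neg_add_le (by linarith) hB.le hBA
          (sub_nonneg.2 hb) _
    _ = A ^ (-(α + 1/2)) * (B ^ (-b) * (A - B) ^ (-lam) *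
          ∫ t in (0:ℝ)..B / A, t ^ (b - 1) * (1 - t) ^ (lam - 1)) := by
        rw [integral_one_sub_rpow_mul_sub_mul_rpow hB hBA hb]
    _ ≤ A ^ (-(α + 1/2)) * (B ^ (-b) * (A - B) ^ (-lam) * beta b lam) := by
        gcongr
        exact integral_rpow_mul_one_sub_rpow_le_beta (by linarith) hlam
          (div_nonneg hB.le hA.le) ((div_le_one hA).2 hBA.le)
    _ = _ := by rw [beta]; ring
end

section
/- Let α ≥ −1/2, b ≥ 1 and 0 < B < A. Then ∫₀¹ (1−s)^{α+b−1/2} (A−Bs)^{−(α+b+1/2)} ds ≤ A^{−(α+1/2)} · B^{−b} · log(A/(A−B)). -/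
/-! With `t = (1 - s) / (A - B s)` the integrand is `t ^ (α + 1/2) * t ^ (b - 1) * (A - B s)⁻¹`.
Since `t ≤ 1/A` and `t ≤ 1/B` on `[0, 1)`, it is at most `A ^ (-(α + 1/2)) B ^ (1 - b) (A - B s)⁻¹`,
and `∫₀¹ (A - B s)⁻¹ ds = B⁻¹ log (A / (A - B))`. -/

open MeasureTheory Set

theorem integral_Ioo_zero_one_inv_sub_mul {A B : ℝ} (hB : B ≠ 0) (hA : 0 < A) (hAB : 0 < A - B) :
    ∫ s in Ioo (0:ℝ) 1, (A - B * s)⁻¹ = B⁻¹ * Real.log (A / (A - B)) := by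
  rw [← integral_Ioc_eq_integral_Ioo, ← intervalIntegral.integral_of_le zero_le_one,
    intervalIntegral.integral_comp_sub_mul (fun x => x⁻¹) hB, mul_one, mul_zero, sub_zero,
    integral_inv_of_pos hAB hA, smul_eq_mul]

theorem Real.rpow_le_rpow_neg_of_le_inv {t a p : ℝ} (ht : 0 ≤ t) (ha : 0 < a) (hta : t ≤ a⁻¹)
    (hp : 0 ≤ p) : t ^ p ≤ a ^ (-p) := by
  rw [Real.rpow_neg ha.le, ← Real.inv_rpow ha.le]
  exact Real.rpow_le_rpow ht hta hp

theorem Real.rpow_mul_rpow_neg_add_one {u v : ℝ} (hu : 0 ≤ u) (hv : 0 < v) (r : ℝ) :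
    u ^ r * v ^ (-(r + 1)) = (u / v) ^ r * v⁻¹ := by
  rw [Real.div_rpow hu hv.le, Real.rpow_neg hv.le, Real.rpow_add_one hv.ne']
  field_simp

theorem rpow_one_sub_mul_rpow_sub_mul_le {A B p q s : ℝ} (hp : 0 ≤ p) (hq : 0 ≤ q) (hB : 0 < B)
    (hBA : B ≤ A) (hs : s ∈ Ico (0:ℝ) 1) :
    (1 - s) ^ (p + q) * (A - B * s) ^ (-(p + q + 1)) ≤ A ^ (-p) * B ^ (-q) * (A - B * s)⁻¹ := by
  obtain ⟨hs₀, hs₁⟩ := hs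
  have hA : 0 < A := hB.trans_le hBA
  have hv : 0 < A - B * s := by nlinarith
  set t := (1 - s) / (A - B * s)
  have ht : 0 < t := div_pos (by linarith) hv
  have htA : t ≤ A⁻¹ := by
    rw [div_le_iff₀ hv, inv_mul_eq_div, le_div_iff₀ hA]
    nlinarith
  have htB : t ≤ B⁻¹ := by
    rw [div_le_iff₀ hv, inv_mul_eq_div, le_div_iff₀ hB]
    nlinarith
  rw [Real.rpow_mul_rpow_neg_add_one (by linarith) hv, Real.rpow_add ht]
  gcongr
  · exact Real.rpow_le_rpow_neg_of_le_inv ht.le hA htA hp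
  · exact Real.rpow_le_rpow_neg_of_le_inv ht.le hB htB hq

/-- For `α ≥ −1/2`, `b ≥ 1` and `0 < B < A`,
`∫₀¹ (1−s)^{α+b−1/2} (A−Bs)^{−(α+b+1/2)} ds ≤ A^{−(α+1/2)} B^{−b} log(A/(A−B))`. -/
theorem stmt14 (α b A B : ℝ) (hα : -(1/2) ≤ α) (hb : 1 ≤ b) (hB : 0 < B) (hBA : B < A) :
    (∫ s in Set.Ioo (0:ℝ) 1, (1 - s) ^ (α + b - 1/2) * (A - B * s) ^ (-(α + b + 1/2))) ≤
      A ^ (-(α + 1/2)) * B ^ (-b) * Real.log (A / (A - B)) := by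
  have hA : 0 < A := hB.trans hBA
  have hAB : 0 < A - B := sub_pos.mpr hBA
  have hv : ∀ s ∈ Icc (0:ℝ) 1, 0 < A - B * s := fun s hs => by nlinarith [hs.1, hs.2]
  have hbound : ∀ s ∈ Ioo (0:ℝ) 1, (1 - s) ^ (α + b - 1/2) * (A - B * s) ^ (-(α + b + 1/2)) ≤
      A ^ (-(α + 1/2)) * B ^ (-(b - 1)) * (A - B * s)⁻¹ := fun s hs => by
    convert rpow_one_sub_mul_rpow_sub_mul_le (p := α + 1/2) (q := b - 1) (by linarith)
      (by linarith) hB hBA.le ⟨hs.1.le, hs.2⟩ using 3 <;> ring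
  have hint : IntegrableOn (fun s => A ^ (-(α + 1/2)) * B ^ (-(b - 1)) * (A - B * s)⁻¹)
      (Ioo 0 1) := by
    refine ContinuousOn.integrableOn_Icc (ContinuousOn.mul continuousOn_const ?_)
      |>.mono_set Ioo_subset_Icc_self
    exact (continuousOn_const.sub (continuousOn_const.mul continuousOn_id)).inv₀
      fun s hs => (hv s hs).ne'
  calc _ ≤ ∫ s in Ioo (0:ℝ) 1, A ^ (-(α + 1/2)) * B ^ (-(b - 1)) * (A - B * s)⁻¹ := by
        refine integral_mono_of_nonneg ?_ hint ((ae_restrict_iff' measurableSet_Ioo).2 <|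
          ae_of_all _ hbound)
        refine (ae_restrict_iff' measurableSet_Ioo).2 (ae_of_all _ fun s hs => ?_)
        have : 0 < 1 - s := by linarith [hs.2]
        have := hv s ⟨hs.1.le, hs.2.le⟩
        positivity
    _ = A ^ (-(α + 1/2)) * (B ^ (-(b - 1)) * B⁻¹) * Real.log (A / (A - B)) := by
        rw [integral_const_mul, integral_Ioo_zero_one_inv_sub_mul hB.ne' hA hAB]
        ring
    _ = A ^ (-(α + 1/2)) * B ^ (-b) * Real.log (A / (A - B)) := by
        rw [← div_eq_mul_inv, ← Real.rpow_sub_one hB.ne', neg_sub, sub_sub_cancel_left]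
end

section
/- Let λ < 0. There exists a constant C, depending only on λ, such that for every α ≥ −1/2, every b ≥ 1 and all 0 < B < A one has ∫₀¹ (1−s)^{α+b−1/2} (A−Bs)^{−(α+b+λ+1/2)} ds ≤ C · A^{−(α+λ+1/2)} · B^{−b}. -/
/-!
Write `p = α + b - 1/2` and `q = α + b + λ + 1/2`, so that `p - q = -1 - λ > -1`.
Since `A(1 - s) ≤ A - Bs ≤ A`, the integrand is at most `A^{-q} ((1 - s)^{p-q} + 1)`, whose
integral is `A^{-q} (1/(-λ) + 1)`; finally `A^{-q} = A^{-(α+λ+1/2)} A^{-b} ≤ A^{-(α+λ+1/2)} B^{-b}`.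
-/

open MeasureTheory Real Set

lemma rpow_le_rpow_add_one {u x : ℝ} (r : ℝ) (hu : 0 < u) (hux : u ≤ x) (hx : x ≤ 1) :
    x ^ r ≤ u ^ r + 1 := by
  rcases le_total r 0 with hr | hr
  · linarith [rpow_le_rpow_of_nonpos hu hux hr]
  · linarith [rpow_le_one (hu.le.trans hux) hx hr, rpow_nonneg hu.le r]

lemma integrableOn_one_sub_rpow {r : ℝ} (hr : -1 < r) :
    IntegrableOn (fun s : ℝ => (1 - s) ^ r) (Ioo 0 1) := by
  have h := (intervalIntegral.intervalIntegrable_rpow' (a := 0) (b := 1) hr).comp_sub_left 1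
  rw [sub_zero, sub_self] at h
  exact (intervalIntegrable_iff_integrableOn_Ioo_of_le zero_le_one).mp h.symm

lemma integral_one_sub_rpow {r : ℝ} (hr : -1 < r) :
    ∫ s in Ioo 0 1, (1 - s) ^ r = 1 / (r + 1) := by
  rw [← integral_Ioc_eq_integral_Ioo, ← intervalIntegral.integral_of_le zero_le_one,
    intervalIntegral.integral_comp_sub_left (fun x : ℝ => x ^ r) 1, integral_rpow (Or.inl hr)]
  simp [zero_rpow (by linarith : r + 1 ≠ 0)]

lemma one_sub_rpow_mul_sub_rpow_le {p q A B s : ℝ} (hp : 0 ≤ p) (hA : 0 < A) (hB : 0 ≤ B)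
    (hBA : B ≤ A) (hs : s ∈ Ioo (0 : ℝ) 1) :
    (1 - s) ^ p * (A - B * s) ^ (-q) ≤ A ^ (-q) * ((1 - s) ^ (p - q) + 1) := by
  obtain ⟨hs0, hs1⟩ := hs
  have hu : 0 < 1 - s := by linarith
  have hBs : B * s ≤ A * s := by gcongr
  have hlow : 1 - s ≤ (A - B * s) / A := by rw [le_div_iff₀ hA]; linarith
  have hhigh : (A - B * s) / A ≤ 1 := by
    rw [div_le_one hA]; linarith [mul_nonneg hB hs0.le]
  calc (1 - s) ^ p * (A - B * s) ^ (-q)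
      = A ^ (-q) * ((1 - s) ^ p * ((A - B * s) / A) ^ (-q)) := by
        rw [div_rpow (by nlinarith) hA.le]
        field_simp [(rpow_pos_of_pos hA (-q)).ne']
    _ ≤ A ^ (-q) * ((1 - s) ^ p * ((1 - s) ^ (-q) + 1)) := by
        gcongr; exact rpow_le_rpow_add_one _ hu hlow hhigh
    _ = A ^ (-q) * ((1 - s) ^ (p - q) + (1 - s) ^ p) := by
        rw [mul_add, mul_one, ← rpow_add hu, ← sub_eq_add_neg]
    _ ≤ A ^ (-q) * ((1 - s) ^ (p - q) + 1) := by
        gcongr; exact rpow_le_one hu.le (by linarith) hp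

lemma setIntegral_one_sub_rpow_mul_sub_rpow_le {p q A B : ℝ} (hp : 0 ≤ p) (hpq : -1 < p - q)
    (hA : 0 < A) (hB : 0 ≤ B) (hBA : B ≤ A) :
    ∫ s in Ioo 0 1, (1 - s) ^ p * (A - B * s) ^ (-q) ≤ A ^ (-q) * (1 / (p - q + 1) + 1) := by
  have hint : IntegrableOn (fun s : ℝ => (1 - s) ^ (p - q) + 1) (Ioo 0 1) :=
    (integrableOn_one_sub_rpow hpq).add (integrableOn_const measure_Ioo_lt_top.ne)
  calc ∫ s in Ioo 0 1, (1 - s) ^ p * (A - B * s) ^ (-q)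
      ≤ ∫ s in Ioo 0 1, A ^ (-q) * ((1 - s) ^ (p - q) + 1) := by
        refine integral_mono_of_nonneg ?_ (hint.const_mul _) ?_
        · filter_upwards [ae_restrict_mem measurableSet_Ioo] with s ⟨hs0, hs1⟩
          have : 0 ≤ A - B * s := by nlinarith
          have : 0 ≤ 1 - s := by linarith
          positivity
        · filter_upwards [ae_restrict_mem measurableSet_Ioo] with s hs
          exact one_sub_rpow_mul_sub_rpow_le hp hA hB hBA hs
    _ = A ^ (-q) * (1 / (p - q + 1) + 1) := by
        rw [integral_const_mul, integral_add (integrableOn_one_sub_rpow hpq)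
          (integrableOn_const measure_Ioo_lt_top.ne), integral_one_sub_rpow hpq,
          setIntegral_const, Real.volume_real_Ioo]
        norm_num

/-- For fixed `λ < 0` there is a constant `C = C(λ)` such that for all
`α ≥ −1/2`, `b ≥ 1` and `0 < B < A`,
`∫₀¹ (1−s)^{α+b−1/2} (A−Bs)^{−(α+b+λ+1/2)} ds ≤ C A^{−(α+λ+1/2)} B^{−b}`. -/
theorem stmt15 (lam : ℝ) (hlam : lam < 0) :
    ∃ C : ℝ, 0 < C ∧ ∀ α b A B : ℝ, -(1/2) ≤ α → 1 ≤ b → 0 < B → B < A →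
      (∫ s in Set.Ioo (0:ℝ) 1, (1 - s) ^ (α + b - 1/2) * (A - B * s) ^ (-(α + b + lam + 1/2))) ≤
        C * A ^ (-(α + lam + 1/2)) * B ^ (-b) := by
  have hnlam : 0 < -lam := by linarith
  refine ⟨1 / (-lam) + 1, by positivity, fun α b A B hα hb hB hBA => ?_⟩
  have hA : 0 < A := hB.trans hBA
  have hexp : α + b - 1/2 - (α + b + lam + 1/2) + 1 = -lam := by ring
  have hint := setIntegral_one_sub_rpow_mul_sub_rpow_le (p := α + b - 1/2)
    (q := α + b + lam + 1/2) (by linarith) (by linarith) hA hB.le hBA.le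
  rw [hexp] at hint
  have hAB : A ^ (-b) ≤ B ^ (-b) := rpow_le_rpow_of_nonpos hB hBA.le (by linarith)
  calc _ ≤ A ^ (-(α + b + lam + 1/2)) * (1 / (-lam) + 1) := hint
    _ = (1 / (-lam) + 1) * A ^ (-(α + lam + 1/2)) * A ^ (-b) := by
        rw [mul_assoc, ← rpow_add hA]; ring_nf
    _ ≤ (1 / (-lam) + 1) * A ^ (-(α + lam + 1/2)) * B ^ (-b) := by
        gcongr
end
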